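/- Let Y be a Fraïssé fence. Then the subspace of Y consisting of the points whose connected component is a singleton is homeomorphic to the Baire space ℕ^ℕ (the countable power of the discrete space ℕ, with the product topology). -/

import Mathlib

open Set

/-- A subset of a topological space is an arc if it is homeomorphic to the unit interval. -/
def IsArc {Y : Type*} [TopologicalSpace Y] (A : Set Y) : Prop :=
  Nonempty (A ≃ₜ unitInterval)

/-- A fence is a compact metrizable space whose connected components are singletons or arcs. -/
def IsFence (Y : Type*) [TopologicalSpace Y] : Prop :=
  CompactSpace Y ∧ TopologicalSpace.MetrizableSpace Y ∧
    ∀ x : Y, connectedComponent x = {x} ∨ IsArc (connectedComponent x)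

/-- A closed partial order on a topological space. -/
def IsClosedPartialOrder {Y : Type*} [TopologicalSpace Y] (r : Y → Y → Prop) : Prop :=
  IsClosed {p : Y × Y | r p.1 p.2} ∧ Reflexive r ∧ AntiSymmetric r ∧ Transitive r

/-- A closed partial order whose restriction to each connected component is a total order. -/
def IsCompatibleOrder {Y : Type*} [TopologicalSpace Y] (r : Y → Y → Prop) : Prop :=
  IsClosedPartialOrder r ∧
    ∀ x : Y, ∀ y ∈ connectedComponent x, ∀ z ∈ connectedComponent x, r y z ∨ r z y

/-- A smooth fence is a fence admitting a closed partial order whose restriction to each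
connected component is a total order. -/
def IsSmoothFence (Y : Type*) [TopologicalSpace Y] : Prop :=
  IsFence Y ∧ ∃ r : Y → Y → Prop, IsCompatibleOrder r

/-- A strongly compatible order: a compatible closed partial order such that any two
comparable points lie in the same connected component. -/
def IsStronglyCompatibleOrder {Y : Type*} [TopologicalSpace Y] (r : Y → Y → Prop) : Prop :=
  IsCompatibleOrder r ∧ ∀ x y : Y, r x y → y ∈ connectedComponent x

/-- `x` is one of the two endpoints of the arc `A`. -/
def IsEndpointOfArc {Y : Type*} [TopologicalSpace Y] (A : Set Y) (x : Y) : Prop :=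
  ∃ (h : A ≃ₜ unitInterval) (hx : x ∈ A), h ⟨x, hx⟩ = 0 ∨ h ⟨x, hx⟩ = 1

/-- A point is an endpoint of the space if, whenever it belongs to an arc, it is one of
its two endpoints. -/
def IsEndpoint {Y : Type*} [TopologicalSpace Y] (x : Y) : Prop :=
  ∀ A : Set Y, IsArc A → x ∈ A → IsEndpointOfArc A x

/-- A Fraïssé fence: a nonempty smooth fence such that for any two open sets meeting a
common connected component there is an arc component with one endpoint in each. -/
def IsFraisseFence (Y : Type*) [TopologicalSpace Y] : Prop :=
  Nonempty Y ∧ IsSmoothFence Y ∧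
    ∀ O O' : Set Y, IsOpen O → IsOpen O' →
      (∃ z : Y, (O ∩ connectedComponent z).Nonempty ∧ (O' ∩ connectedComponent z).Nonempty) →
      ∃ w : Y, IsArc (connectedComponent w) ∧
        ∃ a b : Y, a ≠ b ∧ a ∈ O ∧ b ∈ O' ∧
          IsEndpointOfArc (connectedComponent w) a ∧ IsEndpointOfArc (connectedComponent w) b

/-!
In a compact metric space a point is degenerate (its component is a singleton) iff it has
arbitrarily small clopen neighbourhoods. In a Fraïssé fence every nonempty open set contains both
endpoints of some arc component; these are the least and the greatest point of the arc for the
compatible order, and as the order is closed, an arc with close endpoints is small. Hence every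
nonempty open set contains small nonempty clopen sets, so by Baire the degenerate points are
dense, and every nonempty clopen set `W` splits into infinitely many disjoint small clopen pieces
covering its degenerate points: infinitely many, because the pieces can be chosen to avoid a
nondegenerate point of `W`, while the degenerate points are dense in `W`. Iterating the splitting
gives a Lusin scheme whose induced map is a homeomorphism from `ℕ → ℕ` onto the degenerate points.
-/

open Filter Function Metric PiNat

section ClopenSets

theorem exists_isClopen_mem_subset_of_connectedComponent_subset {X : Type*} [TopologicalSpace X]
    [CompactSpace X] [T2Space X] {x : X} {U : Set X} (hU : IsOpen U)
    (hxU : connectedComponent x ⊆ U) : ∃ C, IsClopen C ∧ x ∈ C ∧ C ⊆ U := by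
  rw [connectedComponent_eq_iInter_isClopen] at hxU
  obtain ⟨t, ht⟩ := hU.isClosed_compl.isCompact.elim_finite_subfamily_closed
    (fun s : {s : Set X // IsClopen s ∧ x ∈ s} => s.1) (fun s => s.2.1.isClosed)
    (by rwa [← disjoint_iff_inter_eq_empty, disjoint_compl_left_iff_subset])
  refine ⟨⋂ s ∈ t, s.1, isClopen_biInter_finset fun s _ => s.2.1, mem_iInter₂.2 fun s _ => s.2.2,
    ?_⟩
  rwa [← disjoint_iff_inter_eq_empty, disjoint_compl_left_iff_subset] at ht

theorem IsClopen.disjointed {X : Type*} [TopologicalSpace X] {c : ℕ → Set X}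
    (hc : ∀ n, IsClopen (c n)) (n : ℕ) : IsClopen (disjointed c n) := by
  rw [disjointed_eq_inter_compl]
  exact (hc n).inter ((finite_lt_nat n).isClopen_biInter fun j _ => (hc j).compl)

theorem exists_pairwise_disjoint_isClopen_cover {X : Type*} [TopologicalSpace X]
    [SecondCountableTopology X] {T : Set X} (hT : T.Nonempty) {P : Set X → Prop}
    (hP : ∀ ⦃s t⦄, s ⊆ t → P t → P s) (h : ∀ x ∈ T, ∃ C, IsClopen C ∧ x ∈ C ∧ P C) :
    ∃ c : ℕ → Set X, (∀ n, IsClopen (c n)) ∧ (∀ n, P (c n)) ∧ Pairwise (Disjoint on c) ∧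
      T ⊆ ⋃ n, c n := by
  choose! C hC using h
  obtain ⟨I, hIc, hI⟩ := TopologicalSpace.isOpen_iUnion_countable (fun x : T => C x)
    fun x => (hC x x.2).1.isOpen
  have : Nonempty T := hT.to_subtype
  obtain ⟨f, hf⟩ := countable_iff_exists_subset_range.1 hIc
  have hclopen : ∀ n, IsClopen (C (f n)) := fun n => (hC _ (f n).2).1
  refine ⟨disjointed fun n => C (f n), IsClopen.disjointed hclopen,
    fun n => hP (disjointed_subset _ n) (hC _ (f n).2).2.2, disjoint_disjointed _, ?_⟩
  intro x hx
  have hxI : x ∈ ⋃ i ∈ I, C i := hI ▸ mem_iUnion.2 ⟨⟨x, hx⟩, (hC x hx).2.1⟩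
  obtain ⟨i, hiI, hxi⟩ := mem_iUnion₂.1 hxI
  obtain ⟨n, rfl⟩ := hf hiI
  rw [iUnion_disjointed]
  exact mem_iUnion.2 ⟨n, hxi⟩

theorem exists_injective_forall_nonempty_iUnion_eq {X : Type*} {c : ℕ → Set X}
    (h : {n | (c n).Nonempty}.Infinite) :
    ∃ e : ℕ → ℕ, Injective e ∧ (∀ n, (c (e n)).Nonempty) ∧ ⋃ n, c (e n) = ⋃ n, c n := by
  refine ⟨Nat.nth fun n => (c n).Nonempty, Nat.nth_injective h, Nat.nth_mem_of_infinite h,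
    Subset.antisymm (iUnion_subset fun n => subset_iUnion _ _) (iUnion_subset fun m x hx => ?_)⟩
  have hm : m ∈ range (Nat.nth fun n => (c n).Nonempty) := by
    rw [Nat.range_nth_of_infinite h]
    exact ⟨x, hx⟩
  obtain ⟨n, rfl⟩ := hm
  exact mem_iUnion.2 ⟨n, hx⟩

end ClopenSets

namespace CantorScheme

variable {β α : Type*} {A : List β → Set α}

theorem eq_of_mem_of_length_eq (hanti : CantorScheme.Antitone A)
    (hdisj : CantorScheme.Disjoint A) :
    ∀ {l l' : List β} {x : α}, x ∈ A l → x ∈ A l' → l.length = l'.length → l = l'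
  | [], [], _, _, _, _ => rfl
  | a :: l, b :: l', x, hx, hx', hlen => by
    obtain rfl : l = l' :=
      eq_of_mem_of_length_eq hanti hdisj (hanti l a hx) (hanti l' b hx') (by simpa using hlen)
    obtain rfl | hab := eq_or_ne a b
    · rfl
    · exact absurd hx' (disjoint_left.1 (hdisj l hab) hx)

theorem exists_forall_mem_res {x : α} (hroot : x ∈ A [])
    (hstep : ∀ l, x ∈ A l → ∃ a, x ∈ A (a :: l)) : ∃ f : ℕ → β, ∀ n, x ∈ A (res f n) := by
  choose g hg using hstep
  let L : ℕ → {l : List β // x ∈ A l} :=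
    fun n => n.rec ⟨[], hroot⟩ fun _ l => ⟨g l.1 l.2 :: l.1, hg l.1 l.2⟩
  have hres : ∀ n, res (fun k => g (L k).1 (L k).2) n = (L n).1 := by
    intro n
    induction n with
    | zero => rfl
    | succ n ih => rw [res_succ, ih]
  exact ⟨_, fun n => hres n ▸ (L n).2⟩

variable [MetricSpace α] [CompleteSpace α]

theorem nonempty_homeomorph_of_isClopen {A : List ℕ → Set α} {T : Set α}
    (hclopen : ∀ l, IsClopen (A l)) (hne : ∀ l, (A l).Nonempty)
    (hanti : CantorScheme.Antitone A) (hdisj : CantorScheme.Disjoint A)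
    (hdiam : VanishingDiam A) (hroot : T ⊆ A []) (hcover : ∀ l, A l ∩ T ⊆ ⋃ a, A (a :: l))
    (hbranch : ∀ f x, (∀ n, x ∈ A (res f n)) → x ∈ T) : Nonempty (T ≃ₜ (ℕ → ℕ)) := by
  have hdom : (inducedMap A).1 = univ :=
    (hanti.closureAntitone fun l => (hclopen l).isClosed).map_of_vanishingDiam hdiam hne
  let Φ : (ℕ → ℕ) → α := fun f => (inducedMap A).2 ⟨f, hdom ▸ mem_univ f⟩
  have hΦmem : ∀ f n, Φ f ∈ A (res f n) := fun f => map_mem _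
  have hΦeq : ∀ f x, (∀ n, x ∈ A (res f n)) → Φ f = x := fun f x hx =>
    eq_of_forall_dist_le fun ε hε => by
      obtain ⟨n, hn⟩ := hdiam.dist_lt ε hε f
      exact (hn _ (hΦmem f n) _ (hx n)).le
  let g : (ℕ → ℕ) → T := fun f => ⟨Φ f, hbranch f _ (hΦmem f)⟩
  have hinj : Injective g := fun f f' h => by
    have h' : (inducedMap A).2 ⟨f, _⟩ = (inducedMap A).2 ⟨f', _⟩ := congrArg Subtype.val h
    exact congrArg Subtype.val (hdisj.map_injective h')
  have hsurj : Surjective g := fun y => by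
    obtain ⟨f, hf⟩ := exists_forall_mem_res (hroot y.2)
      fun l hl => mem_iUnion.1 (hcover l ⟨hl, y.2⟩)
    exact ⟨f, Subtype.ext (hΦeq f y hf)⟩
  have himage : ∀ f n, g '' cylinder f n = Subtype.val ⁻¹' A (res f n) := by
    intro f n
    ext y
    constructor
    · rintro ⟨f', hf', rfl⟩
      rw [cylinder_eq_res, mem_setOf_eq] at hf'
      exact hf' ▸ hΦmem f' n
    · intro hy
      obtain ⟨f', rfl⟩ := hsurj y
      refine ⟨f', ?_, rfl⟩
      rw [cylinder_eq_res, mem_setOf_eq]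
      exact eq_of_mem_of_length_eq hanti hdisj (hΦmem f' n) hy (by simp)
  have hg : IsHomeomorph g :=
    { continuous := (hdiam.map_continuous.comp (continuous_id.subtype_mk _)).subtype_mk _
      isOpenMap := (isTopologicalBasis_cylinders fun _ : ℕ => ℕ).isOpenMap_iff.2 <| by
        rintro _ ⟨f, n, rfl⟩
        exact himage f n ▸ (hclopen _).isOpen.preimage continuous_subtype_val
      bijective := ⟨hinj, hsurj⟩ }
  exact ⟨(hg.homeomorph g).symm⟩

end CantorScheme

section ClopenSplitting

variable {α : Type*} [MetricSpace α]

structure IsClopenSplitting (W T : Set α) (δ : ℝ) (c : ℕ → Set α) : Prop where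
  isClopen : ∀ n, IsClopen (c n)
  nonempty : ∀ n, (c n).Nonempty
  subset : ∀ n, c n ⊆ W
  ediam_le : ∀ n, ediam (c n) ≤ ENNReal.ofReal δ
  pairwise_disjoint : Pairwise (Disjoint on c)
  inter_subset_iUnion : W ∩ T ⊆ ⋃ n, c n

theorem nonempty_homeomorph_of_forall_isClopenSplitting [CompleteSpace α] [Nonempty α]
    {T : Set α}
    (hsplit : ∀ W, IsClopen W → W.Nonempty → ∀ δ : ℝ, 0 < δ → ∃ c, IsClopenSplitting W T δ c)
    (hT : ∀ x, (∀ δ : ℝ, 0 < δ → ∃ C, IsClopen C ∧ x ∈ C ∧ ediam C ≤ ENNReal.ofReal δ) →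
      x ∈ T) :
    Nonempty (T ≃ₜ (ℕ → ℕ)) := by
  choose c hc using hsplit
  let B : List ℕ → {W : Set α // IsClopen W ∧ W.Nonempty} := fun l =>
    l.rec ⟨univ, isClopen_univ, univ_nonempty⟩ fun a l W =>
      ⟨c W.1 W.2.1 W.2.2 (1 / (l.length + 1)) (by positivity) a,
        (hc ..).isClopen a, (hc ..).nonempty a⟩
  have hB : ∀ l, IsClopenSplitting (B l).1 T (1 / (l.length + 1)) fun a => (B (a :: l)).1 :=
    fun l => hc ..
  have hdiam : ∀ f n, ediam (B (res f (n + 1))).1 ≤ ENNReal.ofReal (1 / (n + 1)) := by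
    intro f n
    simpa using (hB (res f n)).ediam_le (f n)
  refine CantorScheme.nonempty_homeomorph_of_isClopen (A := fun l => (B l).1)
    (fun l => (B l).2.1) (fun l => (B l).2.2) (fun l => (hB l).subset)
    (fun l => (hB l).pairwise_disjoint) (fun f => ?_) (subset_univ T)
    (fun l => (hB l).inter_subset_iUnion) fun f x hx => hT x fun δ hδ => ?_
  · rw [← tendsto_add_atTop_iff_nat 1]
    have hlim := ENNReal.tendsto_ofReal (tendsto_one_div_add_atTop_nhds_zero_nat (𝕜 := ℝ))
    rw [ENNReal.ofReal_zero] at hlim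
    exact tendsto_of_tendsto_of_tendsto_of_le_of_le tendsto_const_nhds hlim (fun _ => zero_le)
      (hdiam f)
  · obtain ⟨n, hn⟩ := exists_nat_one_div_lt hδ
    exact ⟨_, (B (res f (n + 1))).2.1, hx (n + 1),
      (hdiam f n).trans (ENNReal.ofReal_le_ofReal hn.le)⟩

end ClopenSplitting

section ConnectedComponents

theorem ediam_le_ofReal_of_subset_ball {X : Type*} [PseudoMetricSpace X] {s : Set X} {x : X}
    {ε : ℝ} (h : s ⊆ ball x ε) : ediam s ≤ ENNReal.ofReal (2 * ε) :=
  ediam_le_of_forall_dist_le fun y hy z hz =>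
    (dist_triangle_right y z x).trans (by linarith [mem_ball.1 (h hy), mem_ball.1 (h hz)])

variable {X : Type*} [MetricSpace X]

theorem connectedComponent_eq_singleton_of_forall_exists_isClopen {x : X}
    (h : ∀ δ : ℝ, 0 < δ → ∃ C, IsClopen C ∧ x ∈ C ∧ ediam C ≤ ENNReal.ofReal δ) :
    connectedComponent x = {x} := by
  refine eq_singleton_iff_unique_mem.2 ⟨mem_connectedComponent, fun y hy => ?_⟩
  refine eq_of_forall_dist_le fun δ hδ => ?_
  obtain ⟨C, hC, hxC, hCδ⟩ := h δ hδ
  have hyC : y ∈ C := hC.connectedComponent_subset hxC hy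
  exact (edist_le_ofReal hδ.le).1 ((edist_le_ediam_of_mem hyC hxC).trans hCδ)

theorem dense_setOf_connectedComponent_eq_singleton [BaireSpace X]
    (h : ∀ V : Set X, IsOpen V → V.Nonempty → ∀ δ : ℝ, 0 < δ →
      ∃ C, IsClopen C ∧ C.Nonempty ∧ C ⊆ V ∧ ediam C ≤ ENNReal.ofReal δ) :
    Dense {x : X | connectedComponent x = {x}} := by
  let U : ℕ → Set X := fun n => ⋃₀ {C | IsClopen C ∧ ediam C ≤ ENNReal.ofReal (1 / (n + 1))}
  have hU : Dense (⋂ n, U n) := by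
    refine dense_iInter_of_isOpen_nat (fun n => isOpen_sUnion fun C hC => hC.1.isOpen)
      fun n => dense_iff_inter_open.2 fun V hV hne => ?_
    obtain ⟨C, hC, ⟨x, hxC⟩, hCV, hCδ⟩ := h V hV hne (1 / (n + 1)) (by positivity)
    exact ⟨x, hCV hxC, mem_sUnion_of_mem hxC ⟨hC, hCδ⟩⟩
  refine hU.mono fun x hx => connectedComponent_eq_singleton_of_forall_exists_isClopen
    fun δ hδ => ?_
  obtain ⟨n, hn⟩ := exists_nat_one_div_lt hδ
  obtain ⟨C, ⟨hC, hCδ⟩, hxC⟩ := mem_sUnion.1 (mem_iInter.1 hx n)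
  exact ⟨C, hC, hxC, hCδ.trans (ENNReal.ofReal_le_ofReal hn.le)⟩

end ConnectedComponents

section Arcs

variable {Y : Type*} [TopologicalSpace Y]

theorem IsEndpointOfArc.isPreconnected_diff {A : Set Y} {a : Y} (ha : IsEndpointOfArc A a) :
    IsPreconnected (A \ {a}) := by
  obtain ⟨h, haA, h01⟩ := ha
  have hcompl : IsPreconnected ({h ⟨a, haA⟩}ᶜ : Set unitInterval) := by
    rcases h01 with h0 | h1
    · rw [h0, show ({0}ᶜ : Set unitInterval) = Ioi ⊥ from Ioi_bot.symm]
      exact isPreconnected_Ioi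
    · rw [h1, show ({1}ᶜ : Set unitInterval) = Iio ⊤ from Iio_top.symm]
      exact isPreconnected_Iio
  rw [← image_singleton, ← h.image_compl, h.isPreconnected_image] at hcompl
  convert hcompl.image _ continuous_subtype_val.continuousOn using 1
  ext y
  simp [and_comm]

theorem IsCompatibleOrder.endpoint_isBot_or_isTop {r : Y → Y → Prop} (hr : IsCompatibleOrder r)
    {w a : Y} (ha : IsEndpointOfArc (connectedComponent w) a) :
    (∀ y ∈ connectedComponent w, r a y) ∨ (∀ y ∈ connectedComponent w, r y a) := by
  obtain ⟨⟨hclosed, hrefl, hanti, -⟩, htot⟩ := hr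
  have haw : a ∈ connectedComponent w := ha.choose_spec.choose
  by_contra! hcon
  obtain ⟨⟨p, hpw, hp⟩, ⟨q, hqw, hq⟩⟩ := hcon
  -- by totality, the points below `a` and those above `a` split the arc minus `a` into two
  -- relatively open pieces, both nonempty when `a` is not extremal
  have hbelow : IsOpen {u | ¬ r a u} :=
    (hclosed.preimage (Continuous.prodMk_right a)).isOpen_compl
  have habove : IsOpen {u | ¬ r u a} :=
    (hclosed.preimage (continuous_id.prodMk continuous_const)).isOpen_compl
  have hcover : connectedComponent w \ {a} ⊆ {u | ¬ r a u} ∪ {u | ¬ r u a} := by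
    rintro u ⟨-, hua⟩
    rw [mem_union, mem_setOf_eq, mem_setOf_eq, ← not_and_or]
    exact fun h => hua (hanti h.2 h.1)
  obtain ⟨u, ⟨huw, -⟩, hu₁, hu₂⟩ := ha.isPreconnected_diff _ _ hbelow habove hcover
    ⟨p, ⟨hpw, fun h => hp (h ▸ hrefl a)⟩, hp⟩ ⟨q, ⟨hqw, fun h => hq (h ▸ hrefl a)⟩, hq⟩
  exact (htot w u huw a haw).elim hu₂ hu₁

end Arcs

section CompactFences

variable {Y : Type*} [MetricSpace Y] [CompactSpace Y]

theorem exists_pos_forall_dist_lt_of_rel {r : Y → Y → Prop}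
    (hclosed : IsClosed {p : Y × Y | r p.1 p.2}) (hanti : AntiSymmetric r) {η : ℝ} (hη : 0 < η) :
    ∃ ε > 0, ∀ p u q, r p u → r u q → dist p q < ε → max (dist p u) (dist u q) < η := by
  let K : Set (Y × Y × Y) :=
    {t | r t.1 t.2.1 ∧ r t.2.1 t.2.2 ∧ η ≤ max (dist t.1 t.2.1) (dist t.2.1 t.2.2)}
  have hK : IsCompact K :=
    ((hclosed.preimage (f := fun t : Y × Y × Y => (t.1, t.2.1)) (by fun_prop)).inter
      ((hclosed.preimage (f := fun t : Y × Y × Y => (t.2.1, t.2.2)) (by fun_prop)).inter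
        (isClosed_le continuous_const (g := fun t : Y × Y × Y =>
          max (dist t.1 t.2.1) (dist t.2.1 t.2.2)) (by fun_prop)))).isCompact
  -- on `K` the ends `p`, `q` are distinct, since `p = q` would force `u = p`
  have hpos : ∀ t ∈ K, 0 < dist t.1 t.2.2 := by
    rintro ⟨p, u, q⟩ ⟨hpu, huq, hη'⟩
    dsimp only at hpu huq hη' ⊢
    refine dist_pos.2 fun hpq => ?_
    subst hpq
    obtain rfl := hanti hpu huq
    simp only [dist_self, max_self] at hη'
    linarith
  obtain ⟨ε, hε, hKε⟩ := hK.exists_forall_le' (by fun_prop) hpos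
  refine ⟨ε, hε, fun p u q hpu huq hpq => ?_⟩
  by_contra! h
  exact (hKε (p, u, q) ⟨hpu, huq, h⟩).not_gt hpq

theorem IsCompatibleOrder.exists_pos_connectedComponent_subset_ball {r : Y → Y → Prop}
    (hr : IsCompatibleOrder r) {η : ℝ} (hη : 0 < η) :
    ∃ ε > 0, ∀ w a b : Y, a ≠ b → IsEndpointOfArc (connectedComponent w) a →
      IsEndpointOfArc (connectedComponent w) b → dist a b < ε →
        connectedComponent w ⊆ ball a η := by
  obtain ⟨ε, hε, hsmall⟩ := exists_pos_forall_dist_lt_of_rel hr.1.1 hr.1.2.2.1 hη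
  refine ⟨ε, hε, fun w a b hab ha hb hdist u hu => mem_ball.2 ?_⟩
  have haw : a ∈ connectedComponent w := ha.choose_spec.choose
  have hbw : b ∈ connectedComponent w := hb.choose_spec.choose
  rcases hr.endpoint_isBot_or_isTop ha with ha' | ha' <;>
    rcases hr.endpoint_isBot_or_isTop hb with hb' | hb'
  · exact absurd (hr.1.2.2.1 (ha' b hbw) (hb' a haw)) hab
  · rw [dist_comm]
    exact (le_max_left _ _).trans_lt (hsmall a u b (ha' u hu) (hb' u hu) hdist)
  · exact (le_max_right _ _).trans_lt (hsmall b u a (hb' u hu) (ha' u hu) (dist_comm a b ▸ hdist))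
  · exact absurd (hr.1.2.2.1 (hb' a haw) (ha' b hbw)) hab

end CompactFences

namespace IsFraisseFence

theorem exists_endpoints_mem {Y : Type*} [TopologicalSpace Y] (hY : IsFraisseFence Y)
    {U : Set Y} (hU : IsOpen U) (hne : U.Nonempty) :
    ∃ w a b : Y, a ≠ b ∧ a ∈ U ∧ b ∈ U ∧ IsEndpointOfArc (connectedComponent w) a ∧
      IsEndpointOfArc (connectedComponent w) b := by
  obtain ⟨x, hx⟩ := hne
  obtain ⟨w, -, a, b, hab, haU, hbU, ha, hb⟩ :=
    hY.2.2 U U hU hU ⟨x, ⟨x, hx, mem_connectedComponent⟩, ⟨x, hx, mem_connectedComponent⟩⟩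
  exact ⟨w, a, b, hab, haU, hbU, ha, hb⟩

variable {Y : Type*} [MetricSpace Y] [CompactSpace Y] (hY : IsFraisseFence Y)
include hY

theorem exists_isClopen_subset {V : Set Y} (hV : IsOpen V) (hne : V.Nonempty) {δ : ℝ}
    (hδ : 0 < δ) : ∃ C, IsClopen C ∧ C.Nonempty ∧ C ⊆ V ∧ ediam C ≤ ENNReal.ofReal δ := by
  obtain ⟨r, hr⟩ := hY.2.1.2
  obtain ⟨x, hxV⟩ := hne
  obtain ⟨ρ, hρ, hxρ⟩ := Metric.isOpen_iff.1 hV x hxV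
  obtain ⟨ε, hε, hsmall⟩ :=
    hr.exists_pos_connectedComponent_subset_ball (lt_min (half_pos hδ) (half_pos hρ))
  obtain ⟨w, a, b, hab, ha, hb, hea, heb⟩ :=
    hY.exists_endpoints_mem (isOpen_ball (x := x) (ε := min (ε / 2) (ρ / 2)))
      (nonempty_ball.2 (by positivity))
  have ha₁ := (mem_ball.1 ha).trans_le (min_le_left _ _)
  have ha₂ := (mem_ball.1 ha).trans_le (min_le_right _ _)
  have hb₁ := (mem_ball.1 hb).trans_le (min_le_left _ _)
  have hcc : connectedComponent a ⊆ ball a (min (δ / 2) (ρ / 2)) := by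
    rw [← connectedComponent_eq hea.choose_spec.choose]
    exact hsmall w a b hab hea heb
      ((dist_triangle_right a b x).trans_lt (by linarith))
  obtain ⟨C, hC, haC, hCa⟩ := exists_isClopen_mem_subset_of_connectedComponent_subset
    isOpen_ball hcc
  refine ⟨C, hC, ⟨a, haC⟩, fun y hy => hxρ ?_,
    (ediam_le_ofReal_of_subset_ball hCa).trans (ENNReal.ofReal_le_ofReal ?_)⟩
  · have hya := (mem_ball.1 (hCa hy)).trans_le (min_le_right _ _)
    exact mem_ball.2 ((dist_triangle y a x).trans_lt (by linarith))
  · linarith [min_le_left (δ / 2) (ρ / 2)]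

theorem dense_setOf_connectedComponent_eq_singleton :
    Dense {x : Y | connectedComponent x = {x}} :=
  _root_.dense_setOf_connectedComponent_eq_singleton fun _ hV hne _ hδ =>
    hY.exists_isClopen_subset hV hne hδ

theorem exists_isClopenSplitting {W : Set Y} (hW : IsClopen W) (hne : W.Nonempty) {δ : ℝ}
    (hδ : 0 < δ) : ∃ c, IsClopenSplitting W {x | connectedComponent x = {x}} δ c := by
  set S := {x : Y | connectedComponent x = {x}}
  have hdense : Dense S := hY.dense_setOf_connectedComponent_eq_singleton
  obtain ⟨w, k, b, hkb, hkW, -, hk, hb⟩ := hY.exists_endpoints_mem hW.isOpen hne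
  have hkS : k ∉ S := fun hkS => by
    have hbk : b ∈ connectedComponent k :=
      connectedComponent_eq hk.choose_spec.choose ▸ hb.choose_spec.choose
    rw [show connectedComponent k = {k} from hkS] at hbk
    exact hkb hbk.symm
  obtain ⟨c, hc, hcP, hdisj, hcover⟩ := exists_pairwise_disjoint_isClopen_cover
    (hdense.inter_open_nonempty W hW.isOpen hne)
    (P := fun C => C ⊆ W ∧ k ∉ C ∧ ediam C ≤ ENNReal.ofReal δ)
    (fun s t hst ht => ⟨hst.trans ht.1, fun hks => ht.2.1 (hst hks), (ediam_mono hst).trans ht.2.2⟩)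
    (by
      rintro x ⟨hxW, hxS⟩
      have hxU : connectedComponent x ⊆ W ∩ ball x (δ / 2) ∩ {k}ᶜ := by
        rw [show connectedComponent x = {x} from hxS, singleton_subset_iff]
        exact ⟨⟨hxW, mem_ball_self (half_pos hδ)⟩, fun hxk => hkS (hxk ▸ hxS)⟩
      obtain ⟨C, hC, hxC, hCU⟩ := exists_isClopen_mem_subset_of_connectedComponent_subset
        ((hW.isOpen.inter isOpen_ball).inter isOpen_compl_singleton) hxU
      refine ⟨C, hC, hxC, fun y hy => (hCU hy).1.1, fun hkC => (hCU hkC).2 rfl, ?_⟩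
      convert ediam_le_ofReal_of_subset_ball fun y hy => (hCU hy).1.2 using 2
      ring)
  -- if only finitely many pieces were nonempty, their union would be a closed set containing
  -- the dense subset `W ∩ S` of `W`, hence `k`
  have hinf : {n | (c n).Nonempty}.Infinite := by
    intro hfin
    have hWS : W ∩ S ⊆ ⋃ n ∈ {n | (c n).Nonempty}, c n := fun x hx => by
      obtain ⟨n, hxn⟩ := mem_iUnion.1 (hcover hx)
      exact mem_biUnion ⟨x, hxn⟩ hxn
    obtain ⟨n, -, hkn⟩ := mem_iUnion₂.1 <| closure_minimal hWS
      (hfin.isClosed_biUnion fun n _ => (hc n).isClosed)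
      (hdense.open_subset_closure_inter hW.isOpen hkW)
    exact (hcP n).2.1 hkn
  obtain ⟨e, he, hne, hunion⟩ := exists_injective_forall_nonempty_iUnion_eq hinf
  exact ⟨fun n => c (e n),
    { isClopen := fun n => hc _
      nonempty := hne
      subset := fun n => (hcP _).1
      ediam_le := fun n => (hcP _).2.2
      pairwise_disjoint := fun m n hmn => hdisj (he.ne hmn)
      inter_subset_iUnion := hunion ▸ hcover }⟩

end IsFraisseFence

/-- The subspace of the Fraïssé fence consisting of the points whose connected component is
a singleton is homeomorphic to the Baire space ℕ^ℕ. -/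
theorem stmt_19 (Y : Type*) [TopologicalSpace Y] (hY : IsFraisseFence Y) :
    Nonempty ({x : Y // connectedComponent x = {x}} ≃ₜ (ℕ → ℕ)) := by
  have : Nonempty Y := hY.1
  have : CompactSpace Y := hY.2.1.1.1
  have : TopologicalSpace.MetrizableSpace Y := hY.2.1.1.2.1
  let : MetricSpace Y := TopologicalSpace.metrizableSpaceMetric Y
  exact nonempty_homeomorph_of_forall_isClopenSplitting
    (fun _ hW hne _ hδ => hY.exists_isClopenSplitting hW hne hδ)
    fun _ hx => connectedComponent_eq_singleton_of_forall_exists_isClopen hx
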